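/- Suppose X_1, …, X_n are mutually (unconditionally) independent (the 'complements' information structure). Then I((X_1,…,X_n); W) ≥ Σ_{i=1}^n I(X_i; W), where (X_1,…,X_n) denotes the joint random variable. -/
import Mathlib


open scoped BigOperators

noncomputable section

variable {Ω : Type*} [Fintype Ω]

/-- `μ` is a probability mass function on the finite sample space `Ω`. -/
def IsPmf (μ : Ω → ℝ) : Prop := (∀ ω, 0 ≤ μ ω) ∧ ∑ ω, μ ω = 1

open Classical in
/-- Probability of the event `A` under the pmf `μ`. -/
def pr (μ : Ω → ℝ) (A : Ω → Prop) : ℝ := ∑ ω, if A ω then μ ω else 0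

/-- Conditional probability of `A` given `B` (with the convention `x / 0 = 0`). -/
def cpr (μ : Ω → ℝ) (A B : Ω → Prop) : ℝ := pr μ (fun ω => A ω ∧ B ω) / pr μ B

open Classical in
/-- Mutual information between the random variables `X` and `Y`,
`I(X;Y) = Σ_{x,y} P[X=x,Y=y] log( P[X=x,Y=y] / (P[X=x]·P[Y=y]) )`. -/
def mi (μ : Ω → ℝ) {S T : Type*} (X : Ω → S) (Y : Ω → T) : ℝ :=
  ∑ x ∈ Finset.univ.image X, ∑ y ∈ Finset.univ.image Y,
    pr μ (fun ω => X ω = x ∧ Y ω = y) *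
      Real.log (pr μ (fun ω => X ω = x ∧ Y ω = y) /
        (pr μ (fun ω => X ω = x) * pr μ (fun ω => Y ω = y)))

open Classical in
/-- Mutual information between `X` and `Y` conditioned on the event `B`,
`I(X;Y|B) = Σ_{x,y} P[X=x,Y=y|B] log( P[X=x,Y=y|B] / (P[X=x|B]·P[Y=y|B]) )`. -/
def miOn (μ : Ω → ℝ) {S T : Type*} (X : Ω → S) (Y : Ω → T) (B : Ω → Prop) : ℝ :=
  ∑ x ∈ Finset.univ.image X, ∑ y ∈ Finset.univ.image Y,
    cpr μ (fun ω => X ω = x ∧ Y ω = y) B *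
      Real.log (cpr μ (fun ω => X ω = x ∧ Y ω = y) B /
        (cpr μ (fun ω => X ω = x) B * cpr μ (fun ω => Y ω = y) B))

open Classical in
/-- Conditional mutual information `I(X;Y|Z) = E_Z[ I(X;Y|Z=z) ]`. -/
def cmi (μ : Ω → ℝ) {S T U : Type*} (X : Ω → S) (Y : Ω → T) (Z : Ω → U) : ℝ :=
  ∑ z ∈ Finset.univ.image Z,
    pr μ (fun ω => Z ω = z) * miOn μ X Y (fun ω => Z ω = z)

/-- The family `X i` is mutually (unconditionally) independent
(the "complements" information structure). -/
def iIndep {n : ℕ} (μ : Ω → ℝ) {S : Type*} (X : Fin n → Ω → S) : Prop :=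
  ∀ x : Fin n → S,
    pr μ (fun ω => ∀ i, X i ω = x i) = ∏ i, pr μ (fun ω => X i ω = x i)

open Classical

lemma pr_nonneg (μ : Ω → ℝ) (hμ : IsPmf μ) (A : Ω → Prop) : 0 ≤ pr μ A := by
  unfold pr
  apply Finset.sum_nonneg
  intro ω _
  split <;> simp [hμ.1 ω]

lemma pr_congr (μ : Ω → ℝ) {A B : Ω → Prop} (h : ∀ ω, A ω ↔ B ω) : pr μ A = pr μ B := by
  unfold pr
  exact Finset.sum_congr rfl fun ω _ => by simp [h ω]

lemma pr_mono (μ : Ω → ℝ) (hμ : IsPmf μ) {A B : Ω → Prop} (h : ∀ ω, A ω → B ω) :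
    pr μ A ≤ pr μ B := by
  unfold pr
  apply Finset.sum_le_sum
  intro ω _
  by_cases hA : A ω
  · simp [hA, h ω hA]
  · simp only [hA, if_false]
    split <;> simp [hμ.1 ω]

lemma pr_eq_zero (μ : Ω → ℝ) {A : Ω → Prop} (h : ∀ ω, ¬ A ω) : pr μ A = 0 := by
  unfold pr
  exact Finset.sum_eq_zero fun ω _ => by simp [h ω]

lemma pr_true (μ : Ω → ℝ) (hμ : IsPmf μ) : pr μ (fun _ => True) = 1 := by
  simpa [pr] using hμ.2

lemma pr_partition (μ : Ω → ℝ) {S : Type*} (X : Ω → S) (A : Ω → Prop) :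
    ∑ x ∈ Finset.univ.image X, pr μ (fun ω => X ω = x ∧ A ω) = pr μ A := by
  unfold pr
  rw [Finset.sum_comm]
  refine Finset.sum_congr rfl fun ω _ => ?_
  by_cases hA : A ω
  · simp only [hA, and_true]
    rw [Finset.sum_eq_single (X ω)]
    · simp
    · intro b _ hb; simp [Ne.symm hb]
    · intro hmem; exact absurd (Finset.mem_image_of_mem X (Finset.mem_univ ω)) hmem
  · simp [hA]

lemma pr_marg_total (μ : Ω → ℝ) (hμ : IsPmf μ) {S : Type*} (X : Ω → S) :
    ∑ x ∈ Finset.univ.image X, pr μ (fun ω => X ω = x) = 1 := by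
  have := pr_partition μ X (fun _ => True)
  simpa [pr_true μ hμ] using this

lemma pr_filter_sum (μ : Ω → ℝ) {n : ℕ} {S T : Type*} (X : Fin n → Ω → S) (W : Ω → T)
    (i : Fin n) (a : S) (w : T) :
    ∑ x ∈ (Finset.univ.image (fun ω (j : Fin n) => X j ω)).filter (fun x => x i = a),
        pr μ (fun ω => (fun j => X j ω) = x ∧ W ω = w)
      = pr μ (fun ω => X i ω = a ∧ W ω = w) := by
  classical
  rw [Finset.sum_filter]
  have step : ∀ x ∈ Finset.univ.image (fun ω (j : Fin n) => X j ω),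
      (if x i = a then pr μ (fun ω => (fun j => X j ω) = x ∧ W ω = w) else 0)
        = pr μ (fun ω => (fun j => X j ω) = x ∧ (X i ω = a ∧ W ω = w)) := by
    intro x _
    by_cases hxa : x i = a
    · simp only [hxa, if_true]
      refine pr_congr μ fun ω => ?_
      constructor
      · rintro ⟨he, hw⟩
        refine ⟨he, ?_, hw⟩
        have := congrFun he i
        simpa [hxa] using this
      · rintro ⟨he, _, hw⟩
        exact ⟨he, hw⟩
    · simp only [hxa, if_false]
      symm
      refine pr_eq_zero μ fun ω => ?_
      rintro ⟨he, ha, _⟩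
      exact hxa (by rw [← congrFun he i]; exact ha)
  rw [Finset.sum_congr rfl step]
  convert pr_partition μ (fun ω (j : Fin n) => X j ω) (fun ω => X i ω = a ∧ W ω = w) using 2
  congr!

/-- Regroup `mi μ (X i) W` as a sum over the joint image. -/
lemma mi_regroup (μ : Ω → ℝ) {n : ℕ} {S T : Type*} (X : Fin n → Ω → S) (W : Ω → T)
    (i : Fin n) (F : S → T → ℝ) :
    ∑ a ∈ Finset.univ.image (X i), ∑ w ∈ Finset.univ.image W,
        pr μ (fun ω => X i ω = a ∧ W ω = w) * F a w
      = ∑ x ∈ Finset.univ.image (fun ω (j : Fin n) => X j ω), ∑ w ∈ Finset.univ.image W,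
          pr μ (fun ω => (fun j => X j ω) = x ∧ W ω = w) * F (x i) w := by
  classical
  rw [Finset.sum_comm, Finset.sum_comm
    (s := Finset.univ.image (fun ω (j : Fin n) => X j ω))]
  refine Finset.sum_congr rfl fun w _ => ?_
  have hmaps : ∀ x ∈ Finset.univ.image (fun ω (j : Fin n) => X j ω),
      x i ∈ Finset.univ.image (X i) := by
    intro x hx
    obtain ⟨ω, _, rfl⟩ := Finset.mem_image.1 hx
    exact Finset.mem_image_of_mem _ (Finset.mem_univ ω)
  rw [← Finset.sum_fiberwise_of_maps_to hmaps
    (fun x => pr μ (fun ω => (fun j => X j ω) = x ∧ W ω = w) * F (x i) w)]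
  refine Finset.sum_congr rfl fun a _ => ?_
  have : ∀ x ∈ (Finset.univ.image (fun ω (j : Fin n) => X j ω)).filter (fun x => x i = a),
      pr μ (fun ω => (fun j => X j ω) = x ∧ W ω = w) * F (x i) w
        = pr μ (fun ω => (fun j => X j ω) = x ∧ W ω = w) * F a w := by
    intro x hx
    rw [(Finset.mem_filter.1 hx).2]
  rw [Finset.sum_congr rfl this, ← Finset.sum_mul, pr_filter_sum μ X W i a w]

/-- Pure-real termwise inequality (Gibbs). -/
lemma log_term_ineq {n : ℕ} (p px pw : ℝ) (pI pXi : Fin n → ℝ)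
    (hp : 0 ≤ p) (hppx : p ≤ px) (hppw : p ≤ pw)
    (hpi : ∀ i, p ≤ pI i) (hpixi : ∀ i, pI i ≤ pXi i)
    (hpxeq : px = ∏ i, pXi i) (hpw0 : 0 ≤ pw) (hpi0 : ∀ i, 0 ≤ pI i) :
    p * ∑ i, Real.log (pI i / (pXi i * pw)) ≤
      p * Real.log (p / (px * pw)) - (p - pw * ∏ i, (pI i / pw)) := by
  rcases eq_or_lt_of_le hp with hp0 | hp0
  · have hq : 0 ≤ pw * ∏ i, (pI i / pw) :=
      mul_nonneg hpw0 (Finset.prod_nonneg fun i _ => div_nonneg (hpi0 i) hpw0)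
    rw [← hp0]
    simp only [zero_mul, zero_sub, sub_neg_eq_add, zero_add]
    linarith
  · have hpw : 0 < pw := lt_of_lt_of_le hp0 hppw
    have hpx' : 0 < px := lt_of_lt_of_le hp0 hppx
    have hpiP : ∀ i, 0 < pI i := fun i => lt_of_lt_of_le hp0 (hpi i)
    have hpXiP : ∀ i, 0 < pXi i := fun i => lt_of_lt_of_le (hpiP i) (hpixi i)
    set q : ℝ := pw * ∏ i, (pI i / pw) with hqdef
    have hqpos : 0 < q :=
      mul_pos hpw (Finset.prod_pos fun i _ => div_pos (hpiP i) hpw)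
    have e1 : ∀ i : Fin n, Real.log (pI i / (pXi i * pw))
        = Real.log (pI i) - Real.log (pXi i) - Real.log pw := by
      intro i
      rw [Real.log_div (hpiP i).ne' (mul_pos (hpXiP i) hpw).ne',
        Real.log_mul (hpXiP i).ne' hpw.ne']
      ring
    have e2 : Real.log (p / (px * pw)) = Real.log p - Real.log px - Real.log pw := by
      rw [Real.log_div hp0.ne' (mul_pos hpx' hpw).ne', Real.log_mul hpx'.ne' hpw.ne']
      ring
    have e3 : Real.log px = ∑ i, Real.log (pXi i) := by
      rw [hpxeq, Real.log_prod]
      intro i _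
      exact (hpXiP i).ne'
    have e4 : Real.log q = Real.log pw + ∑ i, (Real.log (pI i) - Real.log pw) := by
      rw [hqdef, Real.log_mul hpw.ne' (Finset.prod_pos fun i _ => div_pos (hpiP i) hpw).ne',
        Real.log_prod]
      · congr 1
        refine Finset.sum_congr rfl fun i _ => ?_
        rw [Real.log_div (hpiP i).ne' hpw.ne']
      · intro i _
        exact (div_pos (hpiP i) hpw).ne'
    have hsum : ∑ i, Real.log (pI i / (pXi i * pw))
        = ∑ i, Real.log (pI i) - ∑ i, Real.log (pXi i) - (n : ℝ) * Real.log pw := by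
      simp only [e1, Finset.sum_sub_distrib, Finset.sum_const, Finset.card_univ,
        Fintype.card_fin, nsmul_eq_mul]
    have e4' : Real.log q = Real.log pw + (∑ i, Real.log (pI i) - (n : ℝ) * Real.log pw) := by
      rw [e4]
      simp only [Finset.sum_sub_distrib, Finset.sum_const, Finset.card_univ,
        Fintype.card_fin, nsmul_eq_mul]
    have hlog : p * ∑ i, Real.log (pI i / (pXi i * pw))
        = p * Real.log (p / (px * pw)) - p * (Real.log p - Real.log q) := by
      rw [hsum, e2, e3, e4']
      ring
    have hkey : p - q ≤ p * (Real.log p - Real.log q) := by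
      have h1 : Real.log (q / p) ≤ q / p - 1 := Real.log_le_sub_one_of_pos (div_pos hqpos hp0)
      rw [Real.log_div hqpos.ne' hp0.ne'] at h1
      have h2 : p * (Real.log q - Real.log p) ≤ p * (q / p - 1) :=
        mul_le_mul_of_nonneg_left h1 hp
      have h3 : p * (q / p - 1) = q - p := by field_simp
      nlinarith
    linarith

set_option maxHeartbeats 2000000 in
/-- If `X 1, …, X n` are mutually (unconditionally) independent
(the "complements" structure), then
`I((X 1,…,X n); W) ≥ Σ_i I(X i; W)`. -/
theorem mi_joint_ge_sum_of_complements
    {n : ℕ} {S T : Type*} (μ : Ω → ℝ) (hμ : IsPmf μ)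
    (X : Fin n → Ω → S) (W : Ω → T) (h : iIndep μ X) :
    ∑ i, mi μ (X i) W ≤ mi μ (fun ω => fun i => X i ω) W := by
  classical
  -- Step 1: regroup each `mi μ (X i) W` over the joint image.
  have hLHS : ∀ i : Fin n, mi μ (X i) W
      = ∑ x ∈ Finset.univ.image (fun ω (j : Fin n) => X j ω), ∑ w ∈ Finset.univ.image W,
          pr μ (fun ω => (fun j => X j ω) = x ∧ W ω = w) *
            Real.log (pr μ (fun ω => X i ω = x i ∧ W ω = w) /
              (pr μ (fun ω => X i ω = x i) * pr μ (fun ω => W ω = w))) := by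
    intro i
    have h2 := mi_regroup μ X W i (fun a w =>
      Real.log (pr μ (fun ω => X i ω = a ∧ W ω = w) /
        (pr μ (fun ω => X i ω = a) * pr μ (fun ω => W ω = w))))
    simp only [mi]
    exact h2
  -- abbreviations (all with the 'fresh' instances used inside this proof)
  have key :
      ∑ i, mi μ (X i) W
        ≤ ∑ x ∈ Finset.univ.image (fun ω (j : Fin n) => X j ω), ∑ w ∈ Finset.univ.image W,
            pr μ (fun ω => (fun j => X j ω) = x ∧ W ω = w) *
              Real.log (pr μ (fun ω => (fun j => X j ω) = x ∧ W ω = w) /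
                (pr μ (fun ω => (fun j => X j ω) = x) * pr μ (fun ω => W ω = w))) := by
    -- rewrite LHS as a single double sum
    have e0 : ∑ i, mi μ (X i) W
        = ∑ x ∈ Finset.univ.image (fun ω (j : Fin n) => X j ω), ∑ w ∈ Finset.univ.image W,
            pr μ (fun ω => (fun j => X j ω) = x ∧ W ω = w) *
              ∑ i, Real.log (pr μ (fun ω => X i ω = x i ∧ W ω = w) /
                (pr μ (fun ω => X i ω = x i) * pr μ (fun ω => W ω = w))) := by
      rw [Finset.sum_congr rfl fun i _ => hLHS i, Finset.sum_comm]
      refine Finset.sum_congr rfl fun x _ => ?_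
      rw [Finset.sum_comm]
      refine Finset.sum_congr rfl fun w _ => ?_
      rw [Finset.mul_sum]
    rw [e0]
    -- termwise Gibbs bound
    have hterm : ∀ x ∈ Finset.univ.image (fun ω (j : Fin n) => X j ω),
        ∀ w ∈ Finset.univ.image W,
        pr μ (fun ω => (fun j => X j ω) = x ∧ W ω = w) *
            ∑ i, Real.log (pr μ (fun ω => X i ω = x i ∧ W ω = w) /
              (pr μ (fun ω => X i ω = x i) * pr μ (fun ω => W ω = w)))
          ≤ pr μ (fun ω => (fun j => X j ω) = x ∧ W ω = w) *
              Real.log (pr μ (fun ω => (fun j => X j ω) = x ∧ W ω = w) /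
                (pr μ (fun ω => (fun j => X j ω) = x) * pr μ (fun ω => W ω = w)))
            - (pr μ (fun ω => (fun j => X j ω) = x ∧ W ω = w)
               - pr μ (fun ω => W ω = w) * ∏ i,
                  (pr μ (fun ω => X i ω = x i ∧ W ω = w) / pr μ (fun ω => W ω = w))) := by
      intro x hx w hw
      have hpxeq : pr μ (fun ω => (fun j => X j ω) = x) = ∏ i, pr μ (fun ω => X i ω = x i) := by
        rw [show pr μ (fun ω => (fun j => X j ω) = x)
            = pr μ (fun ω => ∀ j, X j ω = x j) from pr_congr μ fun ω => funext_iff]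
        exact h x
      exact log_term_ineq
        (pr μ (fun ω => (fun j => X j ω) = x ∧ W ω = w))
        (pr μ (fun ω => (fun j => X j ω) = x))
        (pr μ (fun ω => W ω = w))
        (fun i => pr μ (fun ω => X i ω = x i ∧ W ω = w))
        (fun i => pr μ (fun ω => X i ω = x i))
        (pr_nonneg μ hμ _)
        (pr_mono μ hμ fun ω hω => hω.1)
        (pr_mono μ hμ fun ω hω => hω.2)
        (fun i => pr_mono μ hμ fun ω hω => ⟨by rw [← congrFun hω.1 i], hω.2⟩)
        (fun i => pr_mono μ hμ fun ω hω => hω.1)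
        hpxeq
        (pr_nonneg μ hμ _)
        (fun i => pr_nonneg μ hμ _)
    refine le_trans
      (Finset.sum_le_sum fun x hx => Finset.sum_le_sum fun w hw => hterm x hx w hw) ?_
    -- total mass facts
    have h1 : ∑ x ∈ Finset.univ.image (fun ω (j : Fin n) => X j ω),
        ∑ w ∈ Finset.univ.image W, pr μ (fun ω => (fun j => X j ω) = x ∧ W ω = w) = 1 := by
      have inner : ∀ x : Fin n → S, ∑ w ∈ Finset.univ.image W,
          pr μ (fun ω => (fun j => X j ω) = x ∧ W ω = w)
            = pr μ (fun ω => (fun j => X j ω) = x) := by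
        intro x
        rw [Finset.sum_congr rfl fun w _ =>
          (pr_congr μ fun ω => and_comm :
            pr μ (fun ω => (fun j => X j ω) = x ∧ W ω = w)
              = pr μ (fun ω => W ω = w ∧ (fun j => X j ω) = x))]
        exact pr_partition μ W _
      rw [Finset.sum_congr rfl fun x _ => inner x]
      have htot := pr_marg_total μ hμ (fun ω (j : Fin n) => X j ω)
      convert htot using 2
      congr!
    have h2 : ∑ x ∈ Finset.univ.image (fun ω (j : Fin n) => X j ω),
        ∑ w ∈ Finset.univ.image W, pr μ (fun ω => W ω = w) * ∏ i,
          (pr μ (fun ω => X i ω = x i ∧ W ω = w) / pr μ (fun ω => W ω = w)) ≤ 1 := by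
      rw [Finset.sum_comm]
      have hw1 : ∀ w ∈ Finset.univ.image W,
          ∑ x ∈ Finset.univ.image (fun ω (j : Fin n) => X j ω),
            pr μ (fun ω => W ω = w) * ∏ i,
              (pr μ (fun ω => X i ω = x i ∧ W ω = w) / pr μ (fun ω => W ω = w))
            ≤ pr μ (fun ω => W ω = w) := by
        intro w hw
        rw [← Finset.mul_sum]
        have hsub : Finset.univ.image (fun ω (j : Fin n) => X j ω)
            ⊆ Fintype.piFinset (fun i => Finset.univ.image (X i)) := by
          intro x hx
          obtain ⟨ω, _, rfl⟩ := Finset.mem_image.1 hx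
          rw [Fintype.mem_piFinset]
          intro i
          exact Finset.mem_image_of_mem _ (Finset.mem_univ ω)
        have hle : ∑ x ∈ Finset.univ.image (fun ω (j : Fin n) => X j ω),
            ∏ i, (pr μ (fun ω => X i ω = x i ∧ W ω = w) / pr μ (fun ω => W ω = w))
              ≤ ∑ x ∈ Fintype.piFinset (fun i => Finset.univ.image (X i)),
                ∏ i, (pr μ (fun ω => X i ω = x i ∧ W ω = w) / pr μ (fun ω => W ω = w)) :=
          Finset.sum_le_sum_of_subset_of_nonneg hsub fun x _ _ =>
            Finset.prod_nonneg fun i _ => div_nonneg (pr_nonneg μ hμ _) (pr_nonneg μ hμ _)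
        have heq : ∑ x ∈ Fintype.piFinset (fun i => Finset.univ.image (X i)),
            ∏ i, (pr μ (fun ω => X i ω = x i ∧ W ω = w) / pr μ (fun ω => W ω = w))
              = ∏ i, ∑ a ∈ Finset.univ.image (X i),
                (pr μ (fun ω => X i ω = a ∧ W ω = w) / pr μ (fun ω => W ω = w)) :=
          (Finset.prod_univ_sum (fun i => Finset.univ.image (X i))
            (fun i a => pr μ (fun ω => X i ω = a ∧ W ω = w) / pr μ (fun ω => W ω = w))).symm
        have hfac : ∀ i : Fin n, ∑ a ∈ Finset.univ.image (X i),
            (pr μ (fun ω => X i ω = a ∧ W ω = w) / pr μ (fun ω => W ω = w)) ≤ 1 := by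
          intro i
          rw [← Finset.sum_div, pr_partition μ (X i) (fun ω => W ω = w)]
          rcases eq_or_lt_of_le (pr_nonneg μ hμ (fun ω => W ω = w)) with h0 | h0
          · rw [← h0]; simp
          · rw [div_self h0.ne']
        have hprod : ∏ i, ∑ a ∈ Finset.univ.image (X i),
            (pr μ (fun ω => X i ω = a ∧ W ω = w) / pr μ (fun ω => W ω = w)) ≤ 1 :=
          Finset.prod_le_one
            (fun i _ => Finset.sum_nonneg fun a _ =>
              div_nonneg (pr_nonneg μ hμ _) (pr_nonneg μ hμ _))
            (fun i _ => hfac i)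
        calc pr μ (fun ω => W ω = w) *
              ∑ x ∈ Finset.univ.image (fun ω (j : Fin n) => X j ω),
                ∏ i, (pr μ (fun ω => X i ω = x i ∧ W ω = w) / pr μ (fun ω => W ω = w))
            ≤ pr μ (fun ω => W ω = w) * 1 :=
              mul_le_mul_of_nonneg_left (le_trans hle (heq ▸ hprod)) (pr_nonneg μ hμ _)
          _ = pr μ (fun ω => W ω = w) := mul_one _
      calc ∑ w ∈ Finset.univ.image W,
            ∑ x ∈ Finset.univ.image (fun ω (j : Fin n) => X j ω),
              pr μ (fun ω => W ω = w) * ∏ i,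
                (pr μ (fun ω => X i ω = x i ∧ W ω = w) / pr μ (fun ω => W ω = w))
          ≤ ∑ w ∈ Finset.univ.image W, pr μ (fun ω => W ω = w) := Finset.sum_le_sum hw1
        _ = 1 := pr_marg_total μ hμ W
    simp only [Finset.sum_sub_distrib]
    linarith
  refine le_trans key (le_of_eq ?_)
  simp only [mi]
  congr!
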